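/- arXiv:0708.2659 — 5 statements merged into one kernel-verified Lean document; each statement's English description precedes it below -/
import Mathlib

section
/- Let S be an ordered face structure and let a, b be distinct non-loop faces of the same dimension such that either γ(a) = γ(b) or δ̇(a) ∩ δ̇(b) ≠ ∅ (where δ̇ denotes the non-empty part of the domain). Then a and b are comparable under the upper order, i.e. a <^+ b or b <^+ a. -/
/-!  Ordered face structures, following M. Zawadowski,
"On ordered face structures and many-to-one computads".

We encode the graded set of faces as `F : ℕ → Type`, where `F (k+1)` is the set
of faces of dimension `k`, and `F 0` is an empty type playing the role of
`S₋₁`.  The codomain of a face of dimension `k+1` is a face of dimension `k`,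
and its domain `δ` is a set of elements of `F (k+1) ⊕ F k`, where `Sum.inl x`
is a genuine face `x` and `Sum.inr u` stands for the empty face `1ᵤ` on `u`.
-/

structure PreOFS where
  F : ℕ → Type
  γ : ∀ {k : ℕ}, F (k + 2) → F (k + 1)
  δ : ∀ {k : ℕ}, F (k + 2) → Set (F (k + 1) ⊕ F k)
  sim : ∀ {k : ℕ}, F (k + 1) → F (k + 1) → Prop

namespace PreOFS

variable (S : PreOFS)

/-- The genuine (non-empty) faces in the domain of `a`. -/
def realDom {k : ℕ} (a : S.F (k + 2)) : Set (S.F (k + 1)) :=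
  {x | Sum.inl x ∈ S.δ a}

/-- `a` has empty domain (`δ(a) = 1ᵤ`). -/
def isEps {k : ℕ} (a : S.F (k + 2)) : Prop :=
  ∃ u, Sum.inr u ∈ S.δ a

/-- `a` is a loop (`δ(a) = γ(a)` as sets). -/
def isLoop {k : ℕ} (a : S.F (k + 2)) : Prop :=
  S.δ a = {Sum.inl (S.γ a)}

/-- Codomain of a generalized face (`γ(1ᵤ) = u`). -/
def cod {k : ℕ} : S.F (k + 2) ⊕ S.F (k + 1) → S.F (k + 1)
  | Sum.inl x => S.γ x
  | Sum.inr u => u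

/-- Domain of a generalized face (`δ(1ᵤ) = u`). -/
def domM {k : ℕ} : S.F (k + 2) ⊕ S.F (k + 1) → Set (S.F (k + 1) ⊕ S.F k)
  | Sum.inl x => S.δ x
  | Sum.inr u => {Sum.inl u}

/-- `δ̇⁻ᵞ(a)`: the non-loop genuine faces in the domain of `a`. -/
def nlDom {k : ℕ} (a : S.F (k + 3)) : Set (S.F (k + 2)) :=
  {x | Sum.inl x ∈ S.δ a ∧ ¬ S.isLoop x}

/-- The strict upper order `<⁺`. -/
def ltP {k : ℕ} : S.F (k + 1) → S.F (k + 1) → Prop :=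
  Relation.TransGen
    (fun a b => ∃ α : S.F (k + 2), ¬ S.isLoop α ∧ Sum.inl a ∈ S.δ α ∧ S.γ α = b)

def leP {k : ℕ} (a b : S.F (k + 1)) : Prop := a = b ∨ S.ltP a b

/-- Comparability under `<⁺`. -/
def perpP {k : ℕ} (a b : S.F (k + 1)) : Prop := S.ltP a b ∨ S.ltP b a

/-- Comparability under `<∼`. -/
def perpS {k : ℕ} (a b : S.F (k + 1)) : Prop := S.sim a b ∨ S.sim b a

/-- The lower relation `<⁻`. -/
def ltM {k : ℕ} : S.F (k + 2) → S.F (k + 2) → Prop :=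
  Relation.TransGen (fun a b => Sum.inl (S.γ a) ∈ S.δ b)

/-- `θ(a) = δ(a) ∪ γ(a)` (with empty faces). -/
def thetaFull {k : ℕ} (a : S.F (k + 2)) : Set (S.F (k + 1) ⊕ S.F k) :=
  insert (Sum.inl (S.γ a)) (S.δ a)

/-- `θ̇(a)`: the genuine faces in `δ(a) ∪ γ(a)`. -/
def thetaDot {k : ℕ} (a : S.F (k + 2)) : Set (S.F (k + 1)) :=
  insert (S.γ a) (S.realDom a)

/-- `ι(b)`: the internal faces of `b`. -/
def iota {k : ℕ} (b : S.F (k + 3)) : Set (S.F (k + 1)) :=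
  {u | ∃ x ∈ S.nlDom b, ∃ y ∈ S.nlDom b, S.γ x = u ∧ u ∈ S.realDom y}

/-- `A ≡₁ B` : equality of sets of generalized faces modulo empty faces. -/
def eq1 {k : ℕ} (A B : Set (S.F (k + 2) ⊕ S.F (k + 1))) : Prop :=
  {x : S.F (k + 2) | Sum.inl x ∈ A} = {x : S.F (k + 2) | Sum.inl x ∈ B} ∧
    ({u : S.F (k + 1) | Sum.inr u ∈ A} ∪
        ⋃ x ∈ {x : S.F (k + 2) | Sum.inl x ∈ A}, S.thetaDot x) =
      ({u : S.F (k + 1) | Sum.inr u ∈ B} ∪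
        ⋃ x ∈ {x : S.F (k + 2) | Sum.inl x ∈ B}, S.thetaDot x)

end PreOFS

namespace PreOFS

/-- Iterated codomain, going down `j` dimensions. -/
def down (S : PreOFS) : ∀ (k j : ℕ), S.F (k + j + 1) → S.F (k + 1)
  | _, 0, a => a
  | k, j + 1, a => down S k j (S.γ a)

/-- `γ⁽ˡ⁾` : iterated codomain down to dimension `l`. -/
def gIter (S : PreOFS) {k : ℕ} (l : ℕ) (h : l ≤ k) (a : S.F (k + 1)) : S.F (l + 1) :=
  down S l (k - l) (_root_.cast (congrArg S.F (by omega : k + 1 = l + (k - l) + 1)) a)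

/-- The combined order `<^S`. -/
def ltS (S : PreOFS) {k : ℕ} (a b : S.F (k + 1)) : Prop :=
  S.ltP a b ∨ ∃ l : ℕ, ∃ h : l ≤ k, S.sim (S.gIter l h a) (S.gIter l h b)

end PreOFS

/-- The axioms of an ordered face structure. -/
structure IsOFS (S : PreOFS) : Prop where
  empty_bot : IsEmpty (S.F 0)
  fin : ∀ k, Finite (S.F k)
  bdd : ∃ n, ∀ k, n < k → IsEmpty (S.F k)
  nonempty₀ : Nonempty (S.F 1)
  dom_nonempty : ∀ {k : ℕ} (a : S.F (k + 2)), (S.δ a).Nonempty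
  dom_eps : ∀ {k : ℕ} (a : S.F (k + 2)) (u : S.F k),
    Sum.inr u ∈ S.δ a → S.δ a = {Sum.inr u}
  dom_dim1 : ∀ a : S.F 2, ∃ x, S.δ a = {Sum.inl x}
  glob_γ : ∀ {k : ℕ} (a : S.F (k + 3)),
    ({S.γ (S.γ a)} : Set (S.F (k + 1))) =
      {y | ∃ e ∈ S.δ a, S.cod e = y} \ (⋃ x ∈ S.nlDom a, S.realDom x)
  glob_δ_low : ∀ a : S.F 3,
    S.realDom (S.γ a) =
      (⋃ e ∈ S.δ a, {x : S.F 1 | Sum.inl x ∈ S.domM e}) \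
        {y : S.F 1 | ∃ x ∈ S.nlDom a, S.γ x = y}
  glob_δ : ∀ {k : ℕ} (a : S.F (k + 4)),
    S.eq1 (S.δ (S.γ a))
      ((⋃ e ∈ S.δ a, S.domM e) \
        {e : S.F (k + 2) ⊕ S.F (k + 1) | ∃ x ∈ S.nlDom a, Sum.inl (S.γ x) = e})
  local_disc : ∀ {k : ℕ} (a : S.F (k + 2)) (x y : S.F (k + 1)),
    Sum.inl x ∈ S.δ a → Sum.inl y ∈ S.δ a → ¬ S.ltP x y
  strictP : ∀ {k : ℕ} (x : S.F (k + 1)), ¬ S.ltP x x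
  linearP₀ : ∀ x y : S.F 1, x = y ∨ S.ltP x y ∨ S.ltP y x
  sim_irrefl : ∀ {k : ℕ} (x : S.F (k + 1)), ¬ S.sim x x
  sim_trans : ∀ {k : ℕ} (x y z : S.F (k + 1)), S.sim x y → S.sim y z → S.sim x z
  disj : ∀ {k : ℕ} (x y : S.F (k + 1)), S.perpS x y → ¬ S.perpP x y
  sim_lt_minus : ∀ {k : ℕ} (a b : S.F (k + 2)), S.sim a b → S.ltM a b
  sim_dim0 : ∀ x y : S.F 1, ¬ S.sim x y
  disj_theta : ∀ {k : ℕ} (a b : S.F (k + 2)),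
    S.thetaFull a ∩ S.thetaFull b = ∅ → (S.sim a b ↔ S.ltM a b)
  pencil₁ : ∀ {k : ℕ} (a b : S.F (k + 2)), a ≠ b →
    (S.thetaDot a ∩ S.thetaDot b).Nonempty → S.perpS a b ∨ S.perpP a b
  pencil₂ : ∀ {k : ℕ} (a b : S.F (k + 3)), S.isEps a →
    S.γ (S.γ a) ∈ S.iota b → S.sim a b ∨ S.ltP a b
  loop_fill : ∀ {k : ℕ} (x : S.F (k + 2)), S.isLoop x →
    ∃ α : S.F (k + 3), ¬ S.isLoop α ∧ S.γ α = x

/-! By pencil linearity `a` and `b` are comparable under `<∼` or under `<⁺`, so it suffices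
to exclude `a <∼ b`. That would give `a <⁻ b`, and following a `<⁻`-chain lifts `γ(a)` to
some `y ∈ δ(b)` with `γ(a) ≤⁺ y`. If `γ(a) = γ(b)` then `y <⁺ γ(b) = γ(a) ≤⁺ y` contradicts
strictness of `<⁺`; if `x ∈ δ(a) ∩ δ(b)` then `x <⁺ γ(a) ≤⁺ y` relates two faces of `δ(b)`,
contradicting local discreteness. -/

namespace PreOFS

variable {S : PreOFS}

theorem ltP_γ_of_mem_δ {k : ℕ} {α : S.F (k + 2)} {x : S.F (k + 1)} (hα : ¬ S.isLoop α)
    (hx : Sum.inl x ∈ S.δ α) : S.ltP x (S.γ α) :=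
  Relation.TransGen.single ⟨α, hα, hx, rfl⟩

theorem leP_γ_of_mem_δ {k : ℕ} {α : S.F (k + 2)} {x : S.F (k + 1)}
    (hx : Sum.inl x ∈ S.δ α) : S.leP x (S.γ α) := by
  by_cases hα : S.isLoop α
  · rw [isLoop] at hα
    rw [hα, Set.mem_singleton_iff, Sum.inl.injEq] at hx
    exact Or.inl hx
  · exact Or.inr (ltP_γ_of_mem_δ hα hx)

theorem leP.trans {k : ℕ} {x y z : S.F (k + 1)} (hxy : S.leP x y) (hyz : S.leP y z) :
    S.leP x z := by
  rcases hxy with rfl | hxy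
  · exact hyz
  · rcases hyz with rfl | hyz
    · exact Or.inr hxy
    · exact Or.inr (hxy.trans hyz)

theorem ltP.trans_leP {k : ℕ} {x y z : S.F (k + 1)} (hxy : S.ltP x y) (hyz : S.leP y z) :
    S.ltP x z := by
  rcases hyz with rfl | hyz
  · exact hxy
  · exact hxy.trans hyz

theorem ltM.exists_mem_δ_leP {k : ℕ} {a b : S.F (k + 2)} (h : S.ltM a b) :
    ∃ y, Sum.inl y ∈ S.δ b ∧ S.leP (S.γ a) y := by
  induction h with
  | single hab => exact ⟨S.γ a, hab, Or.inl rfl⟩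
  | tail _ hcb ih =>
    obtain ⟨y, hy, hay⟩ := ih
    exact ⟨_, hcb, hay.trans (leP_γ_of_mem_δ hy)⟩

theorem thetaDot_inter_nonempty {k : ℕ} {a b : S.F (k + 2)}
    (h : S.γ a = S.γ b ∨ (S.realDom a ∩ S.realDom b).Nonempty) :
    (S.thetaDot a ∩ S.thetaDot b).Nonempty := by
  rcases h with hγ | ⟨x, hxa, hxb⟩
  · exact ⟨S.γ a, Set.mem_insert _ _, hγ ▸ Set.mem_insert _ _⟩
  · exact ⟨x, Set.mem_insert_of_mem _ hxa, Set.mem_insert_of_mem _ hxb⟩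

end PreOFS

namespace IsOFS

open PreOFS

variable {S : PreOFS}

theorem not_ltM_of_γ_eq (hS : IsOFS S) {k : ℕ} {a b : S.F (k + 2)} (hb : ¬ S.isLoop b)
    (hγ : S.γ a = S.γ b) : ¬ S.ltM a b := fun hab => by
  obtain ⟨y, hy, hay⟩ := hab.exists_mem_δ_leP
  exact hS.strictP y ((ltP_γ_of_mem_δ hb hy).trans_leP (hγ ▸ hay))

theorem not_ltM_of_mem_realDom (hS : IsOFS S) {k : ℕ} {a b : S.F (k + 2)} {x : S.F (k + 1)}
    (ha : ¬ S.isLoop a) (hxa : x ∈ S.realDom a) (hxb : x ∈ S.realDom b) :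
    ¬ S.ltM a b := fun hab => by
  obtain ⟨y, hy, hay⟩ := hab.exists_mem_δ_leP
  exact hS.local_disc b x y hxb hy ((ltP_γ_of_mem_δ ha hxa).trans_leP hay)

theorem not_sim (hS : IsOFS S) {k : ℕ} {a b : S.F (k + 2)} (ha : ¬ S.isLoop a) (hb : ¬ S.isLoop b)
    (h : S.γ a = S.γ b ∨ (S.realDom a ∩ S.realDom b).Nonempty) : ¬ S.sim a b := by
  refine fun hab => ?_
  rcases h with hγ | ⟨x, hxa, hxb⟩
  · exact hS.not_ltM_of_γ_eq hb hγ (hS.sim_lt_minus a b hab)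
  · exact hS.not_ltM_of_mem_realDom ha hxa hxb (hS.sim_lt_minus a b hab)

end IsOFS

/-- distinct non-loop faces of the same dimension with equal
codomains or intersecting (non-empty) domains are `<⁺`-comparable. -/
theorem stmt3 (S : PreOFS) (hS : IsOFS S) {k : ℕ} (a b : S.F (k + 2))
    (hab : a ≠ b) (ha : ¬ S.isLoop a) (hb : ¬ S.isLoop b)
    (h : S.γ a = S.γ b ∨ (S.realDom a ∩ S.realDom b).Nonempty) :
    S.ltP a b ∨ S.ltP b a := by
  have h' : S.γ b = S.γ a ∨ (S.realDom b ∩ S.realDom a).Nonempty := by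
    rwa [eq_comm, Set.inter_comm]
  rcases hS.pencil₁ a b hab (PreOFS.thetaDot_inter_nonempty h) with hsim | hlt
  · rcases hsim with hsim | hsim
    · exact absurd hsim (hS.not_sim ha hb h)
    · exact absurd hsim (hS.not_sim hb ha h')
  · exact hlt
end

section
/- Let S be an ordered face structure and a a face of dimension at least 1. Then γ(a) is a loop if and only if either every face in δ(a) is a loop, or a has empty domain. -/
/-! By globularity, `δ(γa)` consists of the faces of `δδ(a)` that are not codomains of
non-loops in `δ(a)`, and `γγ(a)` is the one face of `γδ(a)` not in the domain of such a non-loop.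
If `δ(a)` has no non-loops, both sets are `γδ(a)`, so `γ(a)` is a loop. Conversely, if `γ(a)` is a
loop then `γγ(a)` is not the codomain of a non-loop of `δ(a)`, so the codomain of every non-loop of
`δ(a)` lies in the domain of another one; this gives a `<⁺`-successor inside a finite set of faces,
impossible by strictness unless there are no non-loops at all. -/

theorem Finite.exists_forall_not_rel_of_irrefl_transGen {β : Type*} [Finite β] {r : β → β → Prop}
    (hr : ∀ x, ¬ Relation.TransGen r x x) {T : Set β} (hT : T.Nonempty) :
    ∃ m ∈ T, ∀ t ∈ T, ¬ r m t := by
  let s : β → β → Prop := flip (Relation.TransGen r)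
  have : IsTrans β s := ⟨fun _ _ _ hab hbc => Relation.TransGen.trans hbc hab⟩
  have : Std.Irrefl s := ⟨hr⟩
  obtain ⟨m, hm, hmin⟩ := (Finite.wellFounded_of_trans_of_irrefl s).has_min T hT
  exact ⟨m, hm, fun t ht hmt => hmin t ht (Relation.TransGen.single hmt)⟩

namespace PreOFS

variable {S : PreOFS}

theorem isLoop_iff_realDom_eq (hS : IsOFS S) {k : ℕ} (b : S.F (k + 2)) :
    S.isLoop b ↔ S.realDom b = {S.γ b} := by
  refine ⟨fun h => by ext y; simp [realDom, show S.δ b = _ from h], fun h => ?_⟩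
  have hγ : Sum.inl (S.γ b) ∈ S.δ b := show S.γ b ∈ S.realDom b by rw [h]; rfl
  ext (y | u)
  · exact Set.ext_iff.mp h y |>.trans (by simp)
  · refine ⟨fun hu => ?_, by simp⟩
    simp [hS.dom_eps b u hu] at hγ

theorem domM_eq_singleton_cod {k : ℕ} {e : S.F (k + 2) ⊕ S.F (k + 1)}
    (he : ∀ x, e = Sum.inl x → S.isLoop x) : S.domM e = {Sum.inl (S.cod e)} := by
  cases e with
  | inl x => exact he x rfl
  | inr u => rfl

theorem realDom_γ (hS : IsOFS S) {k : ℕ} (a : S.F (k + 3)) :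
    S.realDom (S.γ a) = {y | ∃ e ∈ S.δ a, Sum.inl y ∈ S.domM e} \ S.γ '' S.nlDom a := by
  cases k with
  | zero =>
    rw [hS.glob_δ_low a]
    ext y
    simp [Set.mem_iUnion]
  | succ k =>
    change {x | Sum.inl x ∈ S.δ (S.γ a)} = _
    rw [(hS.glob_δ a).1]
    ext y
    simp

theorem exists_mem_nlDom_γ_mem_realDom (hS : IsOFS S) {k : ℕ} {a : S.F (k + 3)}
    {z : S.F (k + 2)} (hz : z ∈ S.nlDom a) (hne : S.γ z ≠ S.γ (S.γ a)) :
    ∃ w ∈ S.nlDom a, S.γ z ∈ S.realDom w := by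
  have hcod : S.γ z ∈ {y | ∃ e ∈ S.δ a, S.cod e = y} := ⟨Sum.inl z, hz.1, rfl⟩
  by_contra! h
  have : S.γ z ∈ ({S.γ (S.γ a)} : Set _) := by
    rw [hS.glob_γ a]
    exact ⟨hcod, by simpa using h⟩
  exact hne this

theorem isLoop_of_mem_δ_of_isLoop_γ (hS : IsOFS S) {k : ℕ} {a : S.F (k + 3)}
    (ha : S.isLoop (S.γ a)) {x : S.F (k + 2)} (hx : Sum.inl x ∈ S.δ a) : S.isLoop x := by
  by_contra hxl
  have hγγ : S.γ (S.γ a) ∈ S.realDom (S.γ a) := by simp [(isLoop_iff_realDom_eq hS _).mp ha]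
  have hne : ∀ z ∈ S.nlDom a, S.γ z ≠ S.γ (S.γ a) := fun z hz hz' =>
    (realDom_γ hS a ▸ hγγ).2 ⟨z, hz, hz'⟩
  have := hS.fin (k + 1)
  obtain ⟨_, ⟨z, hz, rfl⟩, hmax⟩ := Finite.exists_forall_not_rel_of_irrefl_transGen
    (fun p => hS.strictP p) (T := S.γ '' S.nlDom a) ⟨S.γ x, x, ⟨hx, hxl⟩, rfl⟩
  obtain ⟨w, hw, hzw⟩ := exists_mem_nlDom_γ_mem_realDom hS hz (hne z hz)
  exact hmax (S.γ w) ⟨w, hw, rfl⟩ ⟨w, hw.2, hzw, rfl⟩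

theorem isLoop_γ_of_nlDom_eq_empty (hS : IsOFS S) {k : ℕ} {a : S.F (k + 3)}
    (h : S.nlDom a = ∅) : S.isLoop (S.γ a) := by
  have hdomM : ∀ e ∈ S.δ a, S.domM e = {Sum.inl (S.cod e)} := fun e he =>
    domM_eq_singleton_cod fun x hx => by
      by_contra hxl
      exact (Set.ext_iff.mp h x).mp ⟨hx ▸ he, hxl⟩
  have hγγ := hS.glob_γ a
  rw [h] at hγγ
  rw [isLoop_iff_realDom_eq hS, realDom_γ hS a, h, Set.image_empty, Set.sdiff_empty]
  simp only [Set.biUnion_empty, Set.sdiff_empty] at hγγ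
  rw [hγγ]
  ext y
  constructor
  · rintro ⟨e, he, hy⟩
    rw [hdomM e he] at hy
    exact ⟨e, he, (Sum.inl_injective hy).symm⟩
  · rintro ⟨e, he, rfl⟩
    exact ⟨e, he, hdomM e he ▸ rfl⟩

end PreOFS

/-- `γ(a)` is a loop iff every face in `δ(a)` is a loop or `a`
has empty domain. -/
theorem stmt5 (S : PreOFS) (hS : IsOFS S) {k : ℕ} (a : S.F (k + 3)) :
    S.isLoop (S.γ a) ↔
      ((∀ x : S.F (k + 2), Sum.inl x ∈ S.δ a → S.isLoop x) ∨ S.isEps a) := by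
  refine ⟨fun ha => Or.inl fun x hx => PreOFS.isLoop_of_mem_δ_of_isLoop_γ hS ha hx, ?_⟩
  rintro (hloops | ⟨u, hu⟩) <;> apply PreOFS.isLoop_γ_of_nlDom_eq_empty hS <;>
    refine Set.eq_empty_of_forall_notMem fun z hz => ?_
  · exact hz.2 (hloops z hz.1)
  · simpa [hS.dom_eps a u hu] using hz.1
end

section
/- Let S be an ordered face structure and a, b faces of the same dimension with a <^+ b. If b is a loop then a is a loop. -/
/-!
If `γ(α)` is a loop, then `γ(γ(α))` lies in `δ(γ(α))`, so by globularity it is not the codomain of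
any non-loop face `x ∈ δ(α)`; the globularity of `γ` then forces `γ(x)` into the domain of another
non-loop `y ∈ δ(α)`, i.e. `γ(x) <⁺ γ(y)`. In a finite structure these steps cannot go on forever, so
`δ(α)` consists of loops. Transporting this back along a chain witnessing `a <⁺ b` proves the claim.
-/

theorem Finite.exists_maximal_of_trans_of_irrefl {α : Type*} [Finite α] (r : α → α → Prop)
    [IsTrans α r] [Std.Irrefl r] {s : Set α} (hs : s.Nonempty) :
    ∃ m ∈ s, ∀ x ∈ s, ¬ r m x :=
  (Finite.wellFounded_of_trans_of_irrefl (Function.swap r)).has_min s hs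

namespace IsOFS

variable {S : PreOFS} (hS : IsOFS S)
include hS

theorem γ_ne_γ_γ_of_isLoop_γ {k : ℕ} {α : S.F (k + 3)} (hα : S.isLoop (S.γ α))
    {x : S.F (k + 2)} (hx : x ∈ S.nlDom α) : S.γ x ≠ S.γ (S.γ α) := by
  intro hxα
  have hmem : S.γ (S.γ α) ∈ S.realDom (S.γ α) := by
    show Sum.inl _ ∈ S.δ _
    rw [hα]
    rfl
  cases k with
  | zero =>
      rw [hS.glob_δ_low α] at hmem
      exact hmem.2 ⟨x, hx, hxα⟩
  | succ k =>
      rw [PreOFS.realDom, (hS.glob_δ α).1] at hmem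
      exact hmem.2 ⟨x, hx, congrArg Sum.inl hxα⟩

theorem exists_ltP_γ_of_isLoop_γ {k : ℕ} {α : S.F (k + 3)} (hα : S.isLoop (S.γ α))
    {x : S.F (k + 2)} (hx : x ∈ S.nlDom α) : ∃ y ∈ S.nlDom α, S.ltP (S.γ x) (S.γ y) := by
  by_contra! hmax
  have hcod : S.γ x ∈ {y | ∃ e ∈ S.δ α, S.cod e = y} := ⟨Sum.inl x, hx.1, rfl⟩
  have hinner : S.γ x ∉ ⋃ y ∈ S.nlDom α, S.realDom y := by
    simp only [Set.mem_iUnion₂, not_exists]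
    exact fun y hy hxy => hmax y hy (.single ⟨y, hy.2, hxy, rfl⟩)
  have hγγ : S.γ x ∈ ({S.γ (S.γ α)} : Set _) := by
    rw [hS.glob_γ α]
    exact ⟨hcod, hinner⟩
  exact hS.γ_ne_γ_γ_of_isLoop_γ hα hx hγγ

theorem nlDom_eq_empty_of_isLoop_γ {k : ℕ} {α : S.F (k + 3)} (hα : S.isLoop (S.γ α)) :
    S.nlDom α = ∅ := by
  rw [← Set.not_nonempty_iff_eq_empty]
  intro hne
  have : Finite (S.F (k + 1)) := hS.fin (k + 1)
  have : IsTrans _ (S.ltP (k := k)) := ⟨fun _ _ _ => Relation.TransGen.trans⟩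
  have : Std.Irrefl (S.ltP (k := k)) := ⟨hS.strictP⟩
  obtain ⟨_, ⟨x, hx, rfl⟩, hmax⟩ := Finite.exists_maximal_of_trans_of_irrefl S.ltP
    (hne.image S.γ)
  obtain ⟨y, hy, hxy⟩ := hS.exists_ltP_γ_of_isLoop_γ hα hx
  exact hmax (S.γ y) ⟨y, hy, rfl⟩ hxy

theorem isLoop_of_mem_δ_of_isLoop_γ {k : ℕ} {α : S.F (k + 3)} (hα : S.isLoop (S.γ α))
    {a : S.F (k + 2)} (ha : Sum.inl a ∈ S.δ α) : S.isLoop a := by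
  by_contra hna
  exact (hS.nlDom_eq_empty_of_isLoop_γ hα).subset ⟨ha, hna⟩

end IsOFS

/-- if `a <⁺ b` and `b` is a loop then `a` is a loop. -/
theorem stmt6 (S : PreOFS) (hS : IsOFS S) {k : ℕ} (a b : S.F (k + 2))
    (h : S.ltP a b) (hb : S.isLoop b) : S.isLoop a := by
  induction h with
  | single hab =>
      obtain ⟨α, -, ha, rfl⟩ := hab
      exact hS.isLoop_of_mem_δ_of_isLoop_γ hb ha
  | tail _ hcb ih =>
      obtain ⟨α, -, hc, rfl⟩ := hcb
      exact ih (hS.isLoop_of_mem_δ_of_isLoop_γ hb hc)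
end

section
/- Let S be an ordered face structure and a a face of S. Then the set { b ∈ S : a ≤^+ b } is linearly ordered by ≤^+. -/
/-!
Globularity makes the codomain map monotone: if `x` lies in the domain of `A`, climbing
through the non-loop faces of `δ A` whose domains contain the current codomain must end at
`γ (γ A)`, so `γ x ≤⁺ γ (γ A)`; hence `α <⁺ β` and `α <⁻ β` both give `γ α ≤⁺ γ β`.
By pencil linearity, two faces with a common domain face are `∼`- or `<⁺`-comparable, so
their codomains are `≤⁺`-comparable. Two upper paths from `a` thus have comparable first
steps, and well-founded induction along the finite strict order `<⁺` compares their ends.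
-/

namespace PreOFS

variable {S : PreOFS} {k : ℕ}

theorem leP_refl (a : S.F (k + 1)) : S.leP a a := Or.inl rfl

theorem leP_of_ltP {a b : S.F (k + 1)} (h : S.ltP a b) : S.leP a b := Or.inr h

theorem leP_trans {a b c : S.F (k + 1)} (hab : S.leP a b) (hbc : S.leP b c) : S.leP a c := by
  rcases hab with rfl | hab
  · exact hbc
  rcases hbc with rfl | hbc
  · exact leP_of_ltP hab
  · exact leP_of_ltP (hab.trans hbc)

theorem exists_step_leP_of_ltP {a b : S.F (k + 1)} (h : S.ltP a b) :
    ∃ α : S.F (k + 2), ¬ S.isLoop α ∧ Sum.inl a ∈ S.δ α ∧ S.leP (S.γ α) b := by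
  obtain ⟨b₁, ⟨α, hα, haα, rfl⟩, hb₁b⟩ := Relation.TransGen.head'_iff.mp h
  exact ⟨α, hα, haα, Relation.reflTransGen_iff_eq_or_transGen.mp hb₁b |>.imp Eq.symm id⟩

theorem γ_leP_γ_of_mem_δ {α β : S.F (k + 2)} (h : Sum.inl (S.γ α) ∈ S.δ β) :
    S.leP (S.γ α) (S.γ β) := by
  by_cases hβ : S.isLoop β
  · rw [show S.δ β = _ from hβ] at h
    exact Or.inl (Sum.inl.inj h)
  · exact leP_of_ltP (.single ⟨β, hβ, h, rfl⟩)

theorem γ_leP_γ_of_ltM {α β : S.F (k + 2)} (h : S.ltM α β) : S.leP (S.γ α) (S.γ β) := by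
  induction h with
  | single h => exact γ_leP_γ_of_mem_δ h
  | tail _ h ih => exact leP_trans ih (γ_leP_γ_of_mem_δ h)

end PreOFS

namespace IsOFS

open PreOFS

variable {S : PreOFS} {k : ℕ}

theorem leP_antisymm (hS : IsOFS S) {a b : S.F (k + 1)} (hab : S.leP a b) (hba : S.leP b a) :
    a = b := by
  rcases hab with rfl | hab
  · rfl
  rcases hba with rfl | hba
  · rfl
  exact absurd (hab.trans hba) (hS.strictP a)

theorem wellFounded_flip_ltP (hS : IsOFS S) (k : ℕ) : WellFounded (flip (S.ltP (k := k))) := by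
  have := hS.fin (k + 1)
  have : Std.Irrefl (flip (S.ltP (k := k))) := ⟨hS.strictP⟩
  have : IsTrans (S.F (k + 1)) (flip S.ltP) := ⟨fun _ _ _ h₁ h₂ => h₂.trans h₁⟩
  exact Finite.wellFounded_of_trans_of_irrefl _

theorem γ_leP_γ_γ_of_mem_δ (hS : IsOFS S) (A : S.F (k + 3)) {x : S.F (k + 2)}
    (hx : Sum.inl x ∈ S.δ A) : S.leP (S.γ x) (S.γ (S.γ A)) := by
  induction x using (InvImage.wf S.γ (hS.wellFounded_flip_ltP k)).induction with
  | _ x ih =>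
    by_cases hup : S.γ x ∈ ⋃ y ∈ S.nlDom A, S.realDom y
    · obtain ⟨y, ⟨hyA, hy⟩, hxy⟩ := Set.mem_iUnion₂.mp hup
      have hstep : S.ltP (S.γ x) (S.γ y) := .single ⟨y, hy, hxy, rfl⟩
      exact leP_trans (leP_of_ltP hstep) (ih y hstep hyA)
    · have htop : S.γ x ∈ ({S.γ (S.γ A)} : Set _) := by
        rw [hS.glob_γ A]
        exact ⟨⟨Sum.inl x, hx, rfl⟩, hup⟩
      exact Or.inl htop

theorem γ_leP_γ_of_ltP (hS : IsOFS S) {α β : S.F (k + 2)} (h : S.ltP α β) :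
    S.leP (S.γ α) (S.γ β) := by
  induction h with
  | single h =>
    obtain ⟨A, -, hαA, rfl⟩ := h
    exact hS.γ_leP_γ_γ_of_mem_δ A hαA
  | tail _ h ih =>
    obtain ⟨A, -, hA, rfl⟩ := h
    exact leP_trans ih (hS.γ_leP_γ_γ_of_mem_δ A hA)

theorem γ_leP_total_of_mem_δ (hS : IsOFS S) {a : S.F (k + 1)} {α β : S.F (k + 2)}
    (hα : Sum.inl a ∈ S.δ α) (hβ : Sum.inl a ∈ S.δ β) :
    S.leP (S.γ α) (S.γ β) ∨ S.leP (S.γ β) (S.γ α) := by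
  by_cases hαβ : α = β
  · exact Or.inl (hαβ ▸ leP_refl _)
  have hpencil : (S.thetaDot α ∩ S.thetaDot β).Nonempty :=
    ⟨a, Set.mem_insert_of_mem _ hα, Set.mem_insert_of_mem _ hβ⟩
  rcases hS.pencil₁ α β hαβ hpencil with (h | h) | (h | h)
  · exact Or.inl (γ_leP_γ_of_ltM (hS.sim_lt_minus _ _ h))
  · exact Or.inr (γ_leP_γ_of_ltM (hS.sim_lt_minus _ _ h))
  · exact Or.inl (hS.γ_leP_γ_of_ltP h)
  · exact Or.inr (hS.γ_leP_γ_of_ltP h)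

theorem leP_total_of_leP (hS : IsOFS S) {a b c : S.F (k + 1)} (hab : S.leP a b)
    (hac : S.leP a c) : S.leP b c ∨ S.leP c b := by
  induction a using (hS.wellFounded_flip_ltP k).induction generalizing b c with
  | _ a ih =>
    rcases hab with rfl | hab
    · exact Or.inl hac
    rcases hac with rfl | hac
    · exact Or.inr (leP_of_ltP hab)
    obtain ⟨α, hα, haα, hαb⟩ := exists_step_leP_of_ltP hab
    obtain ⟨β, hβ, haβ, hβc⟩ := exists_step_leP_of_ltP hac
    rcases hS.γ_leP_total_of_mem_δ haα haβ with h | h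
    · exact ih (S.γ α) (.single ⟨α, hα, haα, rfl⟩) hαb (leP_trans h hβc)
    · exact (ih (S.γ β) (.single ⟨β, hβ, haβ, rfl⟩) hβc (leP_trans h hαb)).symm

end IsOFS

/-- the set `{b | a ≤⁺ b}` is linearly ordered by `≤⁺`. -/
theorem stmt7 (S : PreOFS) (hS : IsOFS S) {k : ℕ} (a : S.F (k + 1)) :
    (∀ b c : S.F (k + 1), S.leP a b → S.leP a c → S.leP b c ∨ S.leP c b) ∧
    (∀ b c : S.F (k + 1), S.leP a b → S.leP a c →
      S.leP b c → S.leP c b → b = c) :=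
  ⟨fun _ _ hab hac => hS.leP_total_of_leP hab hac,
    fun _ _ _ _ hbc hcb => hS.leP_antisymm hbc hcb⟩
end

section
/- Let S be an ordered face structure and a, b, c faces of the same dimension. If a <^+ b and b <^∼ c then a <^∼ c. -/
/-!
From `b <∼ c` we get `b <⁻ c`, and globularity pushes `<⁻` down along `<⁺`, so `a <⁻ c`.
If `θ(a) ∩ θ(c) = ∅`, disjointness turns this into `a <∼ c`. Otherwise `a` and `c` share a
genuine face (nothing is `<⁻`-below a face with empty domain), so by pencil linearity they
are comparable; every alternative to `a <∼ c` makes `b` and `c` comparable by `≤⁺`, because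
the `≤⁺`-upper set of a face is a chain (again by pencil linearity and globularity).
-/

namespace PreOFS

/-- `x ◁⁺ y`: the generating relation of `<⁺`. -/
def ltPStep (S : PreOFS) {k : ℕ} (a b : S.F (k + 1)) : Prop :=
  ∃ α : S.F (k + 2), ¬ S.isLoop α ∧ Sum.inl a ∈ S.δ α ∧ S.γ α = b

def ltMStep (S : PreOFS) {k : ℕ} (a b : S.F (k + 2)) : Prop :=
  Sum.inl (S.γ a) ∈ S.δ b

variable {S : PreOFS} {k : ℕ}

theorem leP_trans_s8 {x y z : S.F (k + 1)} (hxy : S.leP x y) (hyz : S.leP y z) : S.leP x z := by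
  rcases hxy with rfl | hxy
  · exact hyz
  rcases hyz with rfl | hyz
  · exact .inr hxy
  · exact .inr (hxy.trans hyz)

theorem leP_of_reflTransGen {a b : S.F (k + 1)} (h : Relation.ReflTransGen S.ltPStep a b) :
    S.leP a b :=
  (Relation.reflTransGen_iff_eq_or_transGen.mp h).imp_left Eq.symm

theorem leP_cod_of_ltMStep {a b : S.F (k + 2)} (h : S.ltMStep a b) :
    S.leP (S.γ a) (S.γ b) := by
  by_cases hb : S.isLoop b
  · rw [ltMStep, hb, Set.mem_singleton_iff, Sum.inl.injEq] at h
    exact .inl h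
  · exact .inr (.single ⟨b, hb, h, rfl⟩)

theorem leP_cod_of_reflTransGen {a b : S.F (k + 2)}
    (h : Relation.ReflTransGen S.ltMStep a b) : S.leP (S.γ a) (S.γ b) := by
  induction h with
  | refl => exact .inl rfl
  | tail _ hbc ih => exact leP_trans_s8 ih (leP_cod_of_ltMStep hbc)

theorem leP_cod_of_ltM {a b : S.F (k + 2)} (h : S.ltM a b) : S.leP (S.γ a) (S.γ b) :=
  leP_cod_of_reflTransGen h.to_reflTransGen

@[simp]
theorem inl_mem_thetaFull {x : S.F (k + 1)} {a : S.F (k + 2)} :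
    Sum.inl x ∈ S.thetaFull a ↔ x ∈ S.thetaDot a := by
  simp [thetaFull, thetaDot, realDom]

@[simp]
theorem inr_mem_thetaFull {u : S.F k} {a : S.F (k + 2)} :
    Sum.inr u ∈ S.thetaFull a ↔ Sum.inr u ∈ S.δ a := by
  simp [thetaFull]

theorem wellFounded_flip_ltP (hS : IsOFS S) (k : ℕ) :
    WellFounded (flip (S.ltP (k := k))) := by
  have := hS.fin (k + 1)
  have : IsTrans (S.F (k + 1)) (flip S.ltP) := ⟨fun _ _ _ h₁ h₂ => h₂.trans h₁⟩
  have : Std.Irrefl (flip (S.ltP (k := k))) := ⟨hS.strictP⟩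
  exact Finite.wellFounded_of_trans_of_irrefl _

theorem not_ltM_of_isEps (hS : IsOFS S) {x c : S.F (k + 2)} (hc : S.isEps c) :
    ¬ S.ltM x c := by
  obtain ⟨u, hu⟩ := hc
  intro h
  obtain ⟨y, -, hyc⟩ := Relation.TransGen.tail'_iff.mp h
  rw [hS.dom_eps c u hu] at hyc
  simp at hyc

theorem exists_mem_nlDom_ltMStep (hS : IsOFS S) {Γ : S.F (k + 3)} {x : S.F (k + 2)}
    (hx : Sum.inl x ∈ S.δ Γ) (hcod : S.γ x ≠ S.γ (S.γ Γ)) :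
    ∃ y ∈ S.nlDom Γ, S.ltMStep x y := by
  by_contra! hnone
  apply hcod
  change S.γ x ∈ ({S.γ (S.γ Γ)} : Set _)
  rw [hS.glob_γ Γ]
  refine ⟨⟨.inl x, hx, rfl⟩, ?_⟩
  simpa [realDom, ltMStep] using hnone

/-- Globularity: a face of `δ Γ` whose codomain is not `γ (γ Γ)` has its codomain in the
domain of a non-loop face of `δ Γ`, so walking up `δ Γ` this way must end at `γ (γ Γ)`. -/
theorem exists_reflTransGen_ltMStep_cod_eq (hS : IsOFS S) (Γ : S.F (k + 3)) {x : S.F (k + 2)}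
    (hx : Sum.inl x ∈ S.δ Γ) :
    ∃ z, S.γ z = S.γ (S.γ Γ) ∧ Relation.ReflTransGen S.ltMStep x z := by
  induction x using (InvImage.wf S.γ (wellFounded_flip_ltP hS k)).induction with
  | _ x ih =>
  by_cases hcod : S.γ x = S.γ (S.γ Γ)
  · exact ⟨x, hcod, .refl⟩
  obtain ⟨y, hy, hxy⟩ := exists_mem_nlDom_ltMStep hS hx hcod
  obtain ⟨z, hz, hyz⟩ := ih y (.single ⟨y, hy.2, hxy, rfl⟩) hy.1
  exact ⟨z, hz, .head hxy hyz⟩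

theorem leP_cod_of_mem_dom (hS : IsOFS S) {Γ : S.F (k + 3)} {x : S.F (k + 2)}
    (hx : Sum.inl x ∈ S.δ Γ) : S.leP (S.γ x) (S.γ (S.γ Γ)) := by
  obtain ⟨z, hz, hxz⟩ := exists_reflTransGen_ltMStep_cod_eq hS Γ hx
  exact hz ▸ leP_cod_of_reflTransGen hxz

theorem leP_cod_of_ltP (hS : IsOFS S) {x y : S.F (k + 2)} (h : S.ltP x y) :
    S.leP (S.γ x) (S.γ y) := by
  induction h with
  | single h =>
    obtain ⟨Γ, -, hx, rfl⟩ := h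
    exact leP_cod_of_mem_dom hS hx
  | tail _ h ih =>
    obtain ⟨Γ, -, hy, rfl⟩ := h
    exact leP_trans_s8 ih (leP_cod_of_mem_dom hS hy)

theorem ltM_of_mem_dom (hS : IsOFS S) {Γ : S.F (k + 3)} {x c : S.F (k + 2)}
    (hx : Sum.inl x ∈ S.δ Γ) (h : S.ltM (S.γ Γ) c) : S.ltM x c := by
  obtain ⟨e, hΓe, hec⟩ := Relation.TransGen.head'_iff.mp h
  obtain ⟨z, hz, hxz⟩ := exists_reflTransGen_ltMStep_cod_eq hS Γ hx
  have hze : S.ltMStep z e := by rw [ltMStep, hz]; exact hΓe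
  exact (Relation.TransGen.tail' hxz hze).trans_left hec

theorem ltM_of_ltP_of_ltM (hS : IsOFS S) {a b c : S.F (k + 2)} (hab : S.ltP a b)
    (hbc : S.ltM b c) : S.ltM a c := by
  induction hab using Relation.TransGen.head_induction_on with
  | single h =>
    obtain ⟨Γ, -, ha, rfl⟩ := h
    exact ltM_of_mem_dom hS ha hbc
  | head h _ ih =>
    obtain ⟨Γ, -, ha, rfl⟩ := h
    exact ltM_of_mem_dom hS ha ih

/-- Pencil linearity of `α` and `β`, pushed down along `γ`. -/
theorem leP_total_cod_of_mem_dom (hS : IsOFS S) {a : S.F (k + 2)} {α β : S.F (k + 3)}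
    (hα : Sum.inl a ∈ S.δ α) (hβ : Sum.inl a ∈ S.δ β) :
    S.leP (S.γ α) (S.γ β) ∨ S.leP (S.γ β) (S.γ α) := by
  by_cases hαβ : α = β
  · exact .inl (.inl (congrArg S.γ hαβ))
  have hθ : (S.thetaDot α ∩ S.thetaDot β).Nonempty :=
    ⟨a, Set.mem_insert_of_mem _ hα, Set.mem_insert_of_mem _ hβ⟩
  rcases hS.pencil₁ α β hαβ hθ with (h | h) | (h | h)
  · exact .inl (leP_cod_of_ltM (hS.sim_lt_minus α β h))
  · exact .inr (leP_cod_of_ltM (hS.sim_lt_minus β α h))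
  · exact .inl (leP_cod_of_ltP hS h)
  · exact .inr (leP_cod_of_ltP hS h)

theorem leP_total_of_leP (hS : IsOFS S) {a b c : S.F (k + 2)} (hab : S.leP a b)
    (hac : S.leP a c) : S.leP b c ∨ S.leP c b := by
  induction a using (wellFounded_flip_ltP hS (k + 1)).induction with
  | _ a ih =>
  rcases hab with rfl | hab
  · exact .inl hac
  rcases hac with rfl | hac
  · exact .inr (.inr hab)
  obtain ⟨s, ⟨α, hα, haα, rfl⟩, hsb⟩ := Relation.TransGen.head'_iff.mp hab
  obtain ⟨t, ⟨β, hβ, haβ, rfl⟩, htc⟩ := Relation.TransGen.head'_iff.mp hac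
  have has : S.ltP a (S.γ α) := .single ⟨α, hα, haα, rfl⟩
  have hat : S.ltP a (S.γ β) := .single ⟨β, hβ, haβ, rfl⟩
  rcases leP_total_cod_of_mem_dom hS haα haβ with hαβ | hβα
  · exact ih _ has (leP_of_reflTransGen hsb) (leP_trans_s8 hαβ (leP_of_reflTransGen htc))
  · exact ih _ hat (leP_trans_s8 hβα (leP_of_reflTransGen hsb)) (leP_of_reflTransGen htc)

theorem sim_of_ltP_of_sim (hS : IsOFS S) {a b c : S.F (k + 2)} (hab : S.ltP a b)
    (hbc : S.sim b c) : S.sim a c := by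
  have hbc_incomp : ¬ S.perpP b c := hS.disj b c (.inl hbc)
  have hac_lower : S.ltM a c := ltM_of_ltP_of_ltM hS hab (hS.sim_lt_minus b c hbc)
  by_cases hθ : S.thetaFull a ∩ S.thetaFull c = ∅
  · exact (hS.disj_theta a c hθ).mpr hac_lower
  obtain ⟨x | u, hxa, hxc⟩ := Set.nonempty_iff_ne_empty.mpr hθ
  · have hac : a ≠ c := by
      rintro rfl
      exact hbc_incomp (.inr hab)
    rw [inl_mem_thetaFull] at hxa hxc
    rcases hS.pencil₁ a c hac ⟨x, hxa, hxc⟩ with (hac' | hca) | (hac' | hca)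
    · exact hac'
    · exact absurd (.inl hab) (hS.disj a b (.inr (hS.sim_trans b c a hbc hca)))
    · rcases leP_total_of_leP hS (.inr hab) (.inr hac') with (rfl | hbc') | (rfl | hcb)
      · exact absurd hbc (hS.sim_irrefl b)
      · exact absurd (.inl hbc') hbc_incomp
      · exact absurd hbc (hS.sim_irrefl c)
      · exact absurd (.inr hcb) hbc_incomp
    · exact absurd (.inr (hca.trans hab)) hbc_incomp
  · rw [inr_mem_thetaFull] at hxc
    exact absurd hac_lower (not_ltM_of_isEps hS ⟨u, hxc⟩)

end PreOFS

/-- if `a <⁺ b` and `b <∼ c` then `a <∼ c`. -/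
theorem stmt8 (S : PreOFS) (hS : IsOFS S) {k : ℕ} (a b c : S.F (k + 1))
    (h1 : S.ltP a b) (h2 : S.sim b c) : S.sim a c := by
  cases k with
  | zero => exact absurd h2 (hS.sim_dim0 b c)
  | succ k => exact PreOFS.sim_of_ltP_of_sim hS h1 h2
end
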